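/- arXiv:2002.01678 — 2 statements merged into one kernel-verified Lean document; each statement's English description precedes it below -/
import Mathlib

section
/- Let ŷ ∈ ℂ^N with ŷ_i ≠ 0 for all i, Y := diag(ŷ/|ŷ|), L := Y*M for M isometric with ŷ = Mx̂, and 𝓛 := (Re(L) −Im(L)) ∈ ℝ^{N×2n}. Then: G(x̂) is a right singular vector with singular value 1, G(−j x̂) is a right singular vector with singular value 0, and |ŷ| is the left singular vector corresponding to singular value 1; in particular 𝓛 G(x̂) = |ŷ|, 𝓛 G(−j x̂) = 0, and 𝓛ᵀ|ŷ| = G(x̂) (after normalization ‖x̂‖ = ‖ŷ‖ = 1). -/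
open Matrix
open scoped BigOperators

/-! The phase matrix `Y = diag(ŷ/|ŷ|)` satisfies `Y* ŷ = |ŷ|` and `Y |ŷ| = ŷ`, so `L = Y* M` sends
`x̂` to `|ŷ|` and `Lᴴ` sends `|ŷ|` to `Mᴴ ŷ = Mᴴ M x̂ = x̂`. The real matrix `𝓛` acts on `G(x)` as
`x ↦ Re (L x)` and its transpose acts as `v ↦ G(Lᴴ v)` on real vectors, which turns these two
complex identities into the three claims; for `-j x̂` one gets `Re (-j |ŷ|) = 0`. -/

namespace Complex

theorem star_div_norm_mul_self (z : ℂ) : star (z / ‖z‖) * z = ‖z‖ := by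
  rcases eq_or_ne z 0 with rfl | hz
  · simp
  have hz' : (‖z‖ : ℂ) ≠ 0 := by simpa using hz
  rw [star_div₀, star_def, conj_ofReal, div_mul_eq_mul_div, conj_mul',
    sq, mul_div_cancel_right₀ _ hz']

theorem div_norm_mul_norm (z : ℂ) : z / ‖z‖ * ‖z‖ = z := by
  rcases eq_or_ne z 0 with rfl | hz
  · simp
  exact div_mul_cancel₀ z (by simpa using hz)

end Complex

section RealSplitting

variable {m n : Type*}

/-- The realification `G(x) = (Re x; Im x)` of a complex vector. -/
def reImVec (x : n → ℂ) : n ⊕ n → ℝ :=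
  Sum.elim (fun j => (x j).re) (fun j => (x j).im)

/-- The real matrix `𝓛 = (Re L  −Im L)`. -/
def reImMatrix (L : Matrix m n ℂ) : Matrix m (n ⊕ n) ℝ :=
  fun i => Sum.elim (fun j => (L i j).re) (fun j => -(L i j).im)

theorem reImMatrix_mulVec_reImVec [Fintype n] (L : Matrix m n ℂ) (x : n → ℂ) :
    reImMatrix L *ᵥ reImVec x = fun i => (L *ᵥ x) i |>.re := by
  funext i
  simp only [reImMatrix, reImVec, mulVec, dotProduct, Fintype.sum_sum_type, Sum.elim_inl,
    Sum.elim_inr, Complex.re_sum, Complex.mul_re, Finset.sum_sub_distrib, neg_mul,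
    Finset.sum_neg_distrib]
  ring

theorem reImMatrix_transpose_mulVec [Fintype m] (L : Matrix m n ℂ) (v : m → ℝ) :
    (reImMatrix L)ᵀ *ᵥ v = reImVec (Lᴴ *ᵥ fun i => (v i : ℂ)) := by
  funext k
  rcases k with j | j <;>
    simp [reImMatrix, reImVec, mulVec, dotProduct, Complex.re_sum, Complex.im_sum, mul_comm]

end RealSplitting

section Phase

variable {m n : Type*} [Fintype m] [DecidableEq m] [Fintype n]

theorem diagonal_star_phase_mulVec_self (y : m → ℂ) :
    diagonal (fun i => star (y i / ‖y i‖)) *ᵥ y = fun i => (‖y i‖ : ℂ) := by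
  funext i
  rw [mulVec_diagonal, Complex.star_div_norm_mul_self]

theorem conjTranspose_diagonal_star_phase_mulVec_norm (y : m → ℂ) :
    (diagonal fun i => star (y i / ‖y i‖))ᴴ *ᵥ (fun i => (‖y i‖ : ℂ)) = y := by
  funext i
  rw [diagonal_conjTranspose, mulVec_diagonal, Pi.star_apply, star_star,
    Complex.div_norm_mul_norm]

variable (M : Matrix m n ℂ) (x : n → ℂ)

theorem diagonal_star_phase_mul_mulVec :
    (diagonal (fun i => star ((M *ᵥ x) i / ‖(M *ᵥ x) i‖)) * M) *ᵥ x =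
      fun i => (‖(M *ᵥ x) i‖ : ℂ) := by
  rw [← mulVec_mulVec, diagonal_star_phase_mulVec_self]

theorem conjTranspose_diagonal_star_phase_mul_mulVec_norm [DecidableEq n] (hM : Mᴴ * M = 1) :
    (diagonal (fun i => star ((M *ᵥ x) i / ‖(M *ᵥ x) i‖)) * M)ᴴ *ᵥ
      (fun i => (‖(M *ᵥ x) i‖ : ℂ)) = x := by
  rw [conjTranspose_mul, ← mulVec_mulVec, conjTranspose_diagonal_star_phase_mulVec_norm,
    mulVec_mulVec, hM, one_mulVec]

end Phase

theorem stmt12_general (n N : ℕ) (M : Matrix (Fin N) (Fin n) ℂ) (hM : Mᴴ * M = 1)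
    (xhat : Fin n → ℂ)
    (yhat : Fin N → ℂ) (hyhat : yhat = M.mulVec xhat)
    (L : Matrix (Fin N) (Fin n) ℂ)
    (hL : L = fun i j => (starRingEnd ℂ) (yhat i / (‖yhat i‖ : ℂ)) * M i j)
    (cal : Matrix (Fin N) (Fin n ⊕ Fin n) ℝ)
    (hcal : cal = fun i => Sum.elim (fun j => (L i j).re) (fun j => -(L i j).im))
    (G : (Fin n → ℂ) → (Fin n ⊕ Fin n → ℝ))
    (hG : G = fun x => Sum.elim (fun j => (x j).re) (fun j => (x j).im)) :
    cal.mulVec (G xhat) = (fun i => ‖yhat i‖) ∧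
    cal.mulVec (G (fun j => -(Complex.I * xhat j))) = 0 ∧
    cal.transpose.mulVec (fun i => ‖yhat i‖) = G xhat := by
  obtain rfl : cal = reImMatrix L := hcal
  obtain rfl : G = reImVec := hG
  replace hL : L = diagonal (fun i => star (yhat i / ‖yhat i‖)) * M := by
    ext i j
    rw [hL, diagonal_mul]
    rfl
  subst hL hyhat
  have hLx := diagonal_star_phase_mul_mulVec M xhat
  refine ⟨?_, ?_, ?_⟩
  · rw [reImMatrix_mulVec_reImVec, hLx]
    simp
  · have hIx : (fun j => -(Complex.I * xhat j)) = -(Complex.I • xhat) := rfl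
    rw [reImMatrix_mulVec_reImVec, hIx, mulVec_neg, mulVec_smul, hLx]
    funext i
    simp
  · rw [reImMatrix_transpose_mulVec, conjTranspose_diagonal_star_phase_mul_mulVec_norm M xhat hM]

/-- Spectral facts for `𝓛 = (Re L  −Im L)` with `L = Y* M`, `Y = diag(ŷ/|ŷ|)`, `ŷ = M x̂`:
`G(x̂)` is a right singular vector with singular value 1 and left singular vector `|ŷ|`,
and `G(−j x̂)` is a right singular vector with singular value 0. -/
theorem stmt12 (n N : ℕ) (M : Matrix (Fin N) (Fin n) ℂ) (hM : Mᴴ * M = 1)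
    (xhat : Fin n → ℂ) (hxhat : ∑ j, ‖xhat j‖ ^ 2 = 1)
    (yhat : Fin N → ℂ) (hyhat : yhat = M.mulVec xhat) (hy0 : ∀ i, yhat i ≠ 0)
    (L : Matrix (Fin N) (Fin n) ℂ)
    (hL : L = fun i j => (starRingEnd ℂ) (yhat i / (‖yhat i‖ : ℂ)) * M i j)
    (cal : Matrix (Fin N) (Fin n ⊕ Fin n) ℝ)
    (hcal : cal = fun i => Sum.elim (fun j => (L i j).re) (fun j => -(L i j).im))
    (G : (Fin n → ℂ) → (Fin n ⊕ Fin n → ℝ))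
    (hG : G = fun x => Sum.elim (fun j => (x j).re) (fun j => (x j).im)) :
    cal.mulVec (G xhat) = (fun i => ‖yhat i‖) ∧
    cal.mulVec (G (fun j => -(Complex.I * xhat j))) = 0 ∧
    cal.transpose.mulVec (fun i => ‖yhat i‖) = G xhat :=
  stmt12_general n N M hM xhat yhat hyhat L hL cal hcal G hG
end

section
/- Let ŷ ∈ ℂ^N with all coordinates nonzero, Y := diag(ŷ/|ŷ|), and for y ∈ ℂ^N with y*ŷ ≠ 0 set α := (y*ŷ)/|y*ŷ| and η := Y*(αy − ŷ). Then ⟨η, j|ŷ|⟩ = 0, i.e. η is orthogonal to j|ŷ| in the real inner product Re⟨·,·⟩; consequently Im(η) is orthogonal to |ŷ| in ℝ^N. -/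
open scoped BigOperators ComplexInnerProductSpace
open ComplexConjugate

/- Coordinatewise, `conj ηᵢ · |ŷᵢ| = conj α · ŷᵢ conj yᵢ − |ŷᵢ|²`, so `⟨η, |ŷ|⟩ = conj α ⟨y, ŷ⟩ − ‖ŷ‖²`.
The choice of `α` makes `conj α ⟨y, ŷ⟩ = |⟨y, ŷ⟩|` real, hence `⟨η, j|ŷ|⟩ = j (|⟨y, ŷ⟩| − ‖ŷ‖²)`
is purely imaginary; its real part is `∑ Im ηᵢ |ŷᵢ|`. -/

namespace Complex

lemma conj_div_norm_mul_self (z : ℂ) : conj (z / ‖z‖) * z = ‖z‖ := by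
  rcases eq_or_ne z 0 with rfl | hz
  · simp
  rw [map_div₀, conj_ofReal, div_mul_eq_mul_div, conj_mul', sq]
  field_simp [ofReal_ne_zero.mpr (norm_ne_zero_iff.mpr hz)]

lemma conj_phase_residual_mul_norm (α a b : ℂ) :
    conj (conj (b / ‖b‖) * (α * a - b)) * ‖b‖ = conj α * (b * conj a) - (‖b‖ : ℂ) ^ 2 := by
  have hb : b / ‖b‖ * ‖b‖ = b := by
    rcases eq_or_ne b 0 with rfl | hb
    · simp
    exact div_mul_cancel₀ b (ofReal_ne_zero.mpr (norm_ne_zero_iff.mpr hb))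
  simp only [map_mul, map_sub, conj_conj]
  rw [← mul_conj']
  linear_combination (conj α * conj a - conj b) * hb

lemma re_conj_mul_I_mul_ofReal (z : ℂ) (r : ℝ) : (conj z * (I * r)).re = z.im * r := by
  simp [mul_re, mul_im]

end Complex

open Complex in
lemma EuclideanSpace.sum_conj_phase_residual_mul_norm {ι : Type*} [Fintype ι]
    (yhat y : EuclideanSpace ℂ ι) :
    ∑ i, conj (conj (yhat i / ‖yhat i‖) * (⟪y, yhat⟫ / ‖⟪y, yhat⟫‖ * y i - yhat i)) * ‖yhat i‖
      = ((‖⟪y, yhat⟫‖ - ∑ i, ‖yhat i‖ ^ 2 : ℝ) : ℂ) := by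
  have hinner : ∑ i, yhat i * conj (y i) = ⟪y, yhat⟫ := by
    simp [PiLp.inner_apply]
  simp only [conj_phase_residual_mul_norm, Finset.sum_sub_distrib, ← Finset.mul_sum, hinner,
    conj_div_norm_mul_self]
  push_cast
  rfl

theorem stmt14_general (N : ℕ) (yhat : EuclideanSpace ℂ (Fin N))
    (y : EuclideanSpace ℂ (Fin N))
    (α : ℂ) (hα : α = ⟪y, yhat⟫ / (‖⟪y, yhat⟫‖ : ℂ))
    (η : Fin N → ℂ)
    (hη : η = fun i =>
      (starRingEnd ℂ) (yhat i / (‖yhat i‖ : ℂ)) * (α * y i - yhat i)) :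
    (∑ i, (starRingEnd ℂ) (η i) * (Complex.I * (‖yhat i‖ : ℂ))).re = 0 ∧
    ∑ i, (η i).im * ‖yhat i‖ = 0 := by
  have horth : (∑ i, conj (η i) * (Complex.I * (‖yhat i‖ : ℂ))).re = 0 := by
    simp_rw [mul_left_comm _ Complex.I, ← Finset.mul_sum, hη, hα,
      EuclideanSpace.sum_conj_phase_residual_mul_norm]
    rw [Complex.I_mul_re, Complex.ofReal_im, neg_zero]
  refine ⟨horth, ?_⟩
  rw [← horth, Complex.re_sum]
  simp only [Complex.re_conj_mul_I_mul_ofReal]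

/-- With `α := (y*ŷ)/|y*ŷ|` and `η := Y*(αy − ŷ)`, one has `⟨η, j|ŷ|⟩ = 0`
(real-part orthogonality); consequently `Im(η) ⟂ |ŷ|` in `ℝ^N`. -/
theorem stmt14 (N : ℕ) (yhat : EuclideanSpace ℂ (Fin N)) (hy0 : ∀ i, yhat i ≠ 0)
    (y : EuclideanSpace ℂ (Fin N)) (h : ⟪y, yhat⟫ ≠ 0)
    (α : ℂ) (hα : α = ⟪y, yhat⟫ / (‖⟪y, yhat⟫‖ : ℂ))
    (η : Fin N → ℂ)
    (hη : η = fun i =>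
      (starRingEnd ℂ) (yhat i / (‖yhat i‖ : ℂ)) * (α * y i - yhat i)) :
    (∑ i, (starRingEnd ℂ) (η i) * (Complex.I * (‖yhat i‖ : ℂ))).re = 0 ∧
    ∑ i, (η i).im * ‖yhat i‖ = 0 :=
  stmt14_general N yhat y α hα η hη
end
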